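/- Let ψ : ℝ → ℂ and f : ℝ → ℂ be integrable, and let j > 0. Then the function k ↦ W_ψ f(j,k) is integrable on ℝ, and its Fourier transform satisfies, for every ξ ∈ ℝ: ∫_ℝ e^{−2πiξk} W_ψ f(j,k) dk = j^{1/2} · conj(ψ̂(jξ)) · f̂(ξ). -/

import Mathlib

open MeasureTheory Complex

/-- The Fourier transform `ĝ(ξ) = ∫ e^{−2πiξt} g(t) dt`. -/
noncomputable def FT (g : ℝ → ℂ) (ξ : ℝ) : ℂ :=
  ∫ t : ℝ, Complex.exp (-(2 * Real.pi * ξ * t) * Complex.I) * g t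

/-- The continuous wavelet transform
`W_ψ f(j,k) = j^{−1/2} ∫ conj(ψ((t−k)/j)) f(t) dt`. -/
noncomputable def CWT (ψ f : ℝ → ℂ) (j k : ℝ) : ℂ :=
  ((Real.sqrt j : ℝ) : ℂ)⁻¹ * ∫ t : ℝ, (starRingEnd ℂ) (ψ ((t - k) / j)) * f t

/-!
At a fixed scale `j`, the wavelet transform `W_ψ f(j, ·)` is `j^{-1/2}` times the convolution of
`f` with the kernel `x ↦ conj ψ(-x/j)`. Convolutions of integrable functions are integrable and
the Fourier transform turns them into products; conjugation and reflection of the kernel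
conjugate its transform, and the dilation by `j` turns `ψ̂(ξ)` into `j ψ̂(jξ)`.
-/

open FourierTransform ContinuousLinearMap ComplexConjugate
open scoped Convolution RealInnerProductSpace

namespace Real

variable {V : Type*} [NormedAddCommGroup V] [InnerProductSpace ℝ V] [FiniteDimensional ℝ V]
  [MeasurableSpace V] [BorelSpace V]

theorem fourier_conj (h : V → ℂ) (w : V) :
    𝓕 (fun v => conj (h v)) w = conj (𝓕 h (-w)) := by
  simp only [fourier_eq, Circle.smul_def, smul_eq_mul, ← integral_conj, map_mul,
    ← Circle.coe_inv_eq_conj, ← AddChar.map_neg_eq_inv, inner_neg_right, neg_neg]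

theorem fourier_comp_div {E : Type*} [NormedAddCommGroup E] [NormedSpace ℂ E] (h : ℝ → E) {a : ℝ}
    (ha : a ≠ 0) (ξ : ℝ) : 𝓕 (fun x => h (x / a)) ξ = |a| • 𝓕 h (a * ξ) := by
  simp only [fourier_real_eq]
  rw [← Measure.integral_comp_div (fun y => 𝐞 (-(y * (a * ξ))) • h y) a]
  congr! 4 with x
  field_simp

theorem fourier_const_smul {E : Type*} [NormedAddCommGroup E] [NormedSpace ℂ E] (r : ℂ)
    (h : V → E) : 𝓕 (r • h) = r • 𝓕 h :=
  VectorFourier.fourierIntegral_const_smul _ _ _ _ _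

end Real

theorem FT_eq_fourier (g : ℝ → ℂ) (ξ : ℝ) : FT g ξ = 𝓕 g ξ := by
  simp only [FT, Real.fourier_real_eq_integral_exp_smul, smul_eq_mul]
  congr! 4 with t
  push_cast
  ring

noncomputable def cwtKernel (ψ : ℝ → ℂ) (j : ℝ) : ℝ → ℂ := fun x => conj (ψ (x / -j))

theorem integrable_cwtKernel {ψ : ℝ → ℂ} (hψ : Integrable ψ) {j : ℝ} (hj : j ≠ 0) :
    Integrable (cwtKernel ψ j) :=
  conjCLE.toContinuousLinearMap.integrable_comp (hψ.comp_div (neg_ne_zero.mpr hj))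

theorem fourier_cwtKernel (ψ : ℝ → ℂ) {j : ℝ} (hj : j ≠ 0) (ξ : ℝ) :
    𝓕 (cwtKernel ψ j) ξ = |j| * conj (𝓕 ψ (j * ξ)) := by
  unfold cwtKernel
  rw [Real.fourier_conj, Real.fourier_comp_div _ (neg_ne_zero.mpr hj)]
  simp [abs_neg]

theorem CWT_eq_smul_convolution (ψ f : ℝ → ℂ) (j : ℝ) :
    CWT ψ f j = ((Real.sqrt j : ℝ) : ℂ)⁻¹ • (f ⋆[mul ℂ ℂ] cwtKernel ψ j) := by
  ext k
  simp only [CWT, convolution, cwtKernel, mul_apply', Pi.smul_apply, smul_eq_mul]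
  congr! 3 with t
  rw [mul_comm, div_neg, ← neg_div, neg_sub]

theorem cwt_integrable_and_fourier (ψ f : ℝ → ℂ)
    (hψ : Integrable ψ) (hf : Integrable f) (j : ℝ) (hj : 0 < j) :
    Integrable (fun k : ℝ => CWT ψ f j k) ∧
    ∀ ξ : ℝ,
      (∫ k : ℝ, Complex.exp (-(2 * Real.pi * ξ * k) * Complex.I) * CWT ψ f j k)
        = ((Real.sqrt j : ℝ) : ℂ) * (starRingEnd ℂ) (FT ψ (j * ξ)) * FT f ξ := by
  have hg := integrable_cwtKernel hψ hj.ne'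
  refine ⟨?_, fun ξ => ?_⟩
  · rw [CWT_eq_smul_convolution]
    exact (hf.integrable_convolution _ hg).smul _
  · have hsqrt : ((Real.sqrt j : ℝ) : ℂ)⁻¹ * |j| = Real.sqrt j := by
      rw [abs_of_pos hj, inv_mul_eq_div]
      exact_mod_cast Real.div_sqrt
    change FT (CWT ψ f j) ξ = _
    rw [FT_eq_fourier, FT_eq_fourier, FT_eq_fourier, CWT_eq_smul_convolution,
      Real.fourier_const_smul, Pi.smul_apply, Real.fourier_mul_convolution_eq hf hg,
      fourier_cwtKernel ψ hj.ne', smul_eq_mul]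
    linear_combination (𝓕 f ξ * conj (𝓕 ψ (j * ξ))) * hsqrt
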